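/- arXiv:2207.03658 — 2 statements merged into one kernel-verified Lean document; each statement's English description precedes it below -/
import Mathlib

section
/- The measure dμ_R(b,a,φ) = a⁻¹ db da dφ on the affine Poincaré group is right-invariant: for every integrable f and every (b₀,a₀,φ₀) ∈ G, ∫ f((b,a,φ)∗(b₀,a₀,φ₀)) a⁻¹ db da dφ = ∫ f(b,a,φ) a⁻¹ db da dφ. -/
open Real MeasureTheory Matrix Set

noncomputable section

/-- Hyperbolic rotation matrix. -/
def Lam (φ : ℝ) : Matrix (Fin 2) (Fin 2) ℝ :=
  !![Real.cosh φ, Real.sinh φ; Real.sinh φ, Real.cosh φ]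

/-- Minkowski inner product on ℝ². -/
def mink (x y : Fin 2 → ℝ) : ℝ := x 0 * y 0 - x 1 * y 1

/-- Underlying set of the affine Poincaré group. -/
abbrev P : Type := (Fin 2 → ℝ) × ℝ × ℝ

/-- Group operation. -/
def Pmul (g h : P) : P :=
  (g.1 + g.2.1 • (Lam g.2.2).mulVec h.1, g.2.1 * h.2.1, g.2.2 + h.2.2)

/-- Inverse. -/
def Pinv (g : P) : P :=
  (-(g.2.1⁻¹ • (Lam (-g.2.2)).mulVec g.1), g.2.1⁻¹, -g.2.2)

/-- Left Haar measure `a⁻³ db da dφ` on the affine Poincaré group. -/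
def muL : Measure P :=
  ((volume : Measure P).restrict {g : P | 0 < g.2.1}).withDensity
    fun g => ENNReal.ofReal ((g.2.1 ^ 3)⁻¹)

/-- Right Haar measure `a⁻¹ db da dφ` on the affine Poincaré group. -/
def muR : Measure P :=
  ((volume : Measure P).restrict {g : P | 0 < g.2.1}).withDensity
    fun g => ENNReal.ofReal (g.2.1⁻¹)

/-!
In the coordinates `(b, (a, φ))`, `muR` is the product of Lebesgue measure `db` with
`(da / a) ⊗ dφ`. Right multiplication by `(b₀, a₀, φ₀)` acts on `(a, φ)` by
`(a a₀, φ + φ₀)`, which preserves `(da / a) ⊗ dφ`, and on `b` by the translation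
`b ↦ b + a Λ_φ b₀`, whose amount depends only on `(a, φ)`. By Fubini such a skew product of
measure-preserving maps preserves the product measure.
-/

open scoped ENNReal

namespace MeasureTheory

theorem MeasurableEquiv.map_withDensity {α β : Type*} [MeasurableSpace α] [MeasurableSpace β]
    (e : α ≃ᵐ β) (μ : Measure α) (w : α → ℝ≥0∞) :
    (μ.withDensity w).map e = (μ.map e).withDensity (w ∘ e.symm) := by
  ext s hs
  rw [e.map_apply, withDensity_apply _ (e.measurable hs), withDensity_apply _ hs,
    e.restrict_map, lintegral_map_equiv]
  simp

theorem MeasurePreserving.add_skew {G β : Type*} [MeasurableSpace G] [AddGroup G]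
    [MeasurableAdd₂ G] {μ : Measure G} [μ.IsAddRightInvariant] [SFinite μ] [MeasurableSpace β]
    {ν : Measure β} [SFinite ν] {S : β → β} (hS : MeasurePreserving S ν ν) {c : β → G}
    (hc : Measurable c) :
    MeasurePreserving (fun p : G × β => (p.1 + c p.2, S p.2)) (μ.prod ν) (μ.prod ν) := by
  have hskew := hS.skew_product (g := fun y x => x + c y)
    (measurable_snd.add (hc.comp measurable_fst))
    (ae_of_all _ fun y => (measurePreserving_add_right μ (c y)).map_eq)
  exact (Measure.measurePreserving_swap.comp hskew).comp Measure.measurePreserving_swap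

end MeasureTheory

open MeasureTheory

/-- The Haar measure `da / a` of the multiplicative group `(0, ∞)`, as a measure on `ℝ`. -/
def mulHaarIoi : Measure ℝ :=
  ((volume : Measure ℝ).restrict (Ioi 0)).withDensity fun a => ENNReal.ofReal a⁻¹

instance : SFinite mulHaarIoi := by
  unfold mulHaarIoi
  infer_instance

theorem measurePreserving_mul_right_mulHaarIoi {a₀ : ℝ} (ha₀ : 0 < a₀) :
    MeasurePreserving (· * a₀) mulHaarIoi mulHaarIoi := by
  refine ⟨measurable_mul_const a₀, ?_⟩
  let e := MeasurableEquiv.mulRight₀ a₀ ha₀.ne'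
  have he : ⇑e = (· * a₀) := rfl
  have hIoi : e ⁻¹' Ioi 0 = Ioi 0 := by
    ext a
    simp [he, ha₀]
  calc Measure.map (· * a₀) mulHaarIoi
      = ((ENNReal.ofReal |a₀⁻¹| • volume).restrict (Ioi 0)).withDensity
          fun b => ENNReal.ofReal (b / a₀)⁻¹ := by
        rw [mulHaarIoi, ← he, e.map_withDensity, ← hIoi, ← Measure.restrict_map e.measurable
          measurableSet_Ioi, hIoi, he, Real.map_volume_mul_right ha₀.ne']
        rfl
    _ = mulHaarIoi := by
        rw [Measure.restrict_smul, withDensity_smul_measure, ← withDensity_smul' _ _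
          ENNReal.ofReal_ne_top, mulHaarIoi]
        congr 1
        funext b
        rw [Pi.smul_apply, smul_eq_mul, ← ENNReal.ofReal_mul (abs_nonneg _),
          abs_of_pos (inv_pos.mpr ha₀), inv_div, div_eq_mul_inv, inv_mul_cancel_left₀ ha₀.ne']

theorem muR_eq_prod :
    muR = (volume : Measure (Fin 2 → ℝ)).prod (mulHaarIoi.prod (volume : Measure ℝ)) := by
  have hpos : {g : P | 0 < g.2.1} = univ ×ˢ (Ioi 0 ×ˢ univ) := by
    ext g
    simp
  rw [muR, hpos, Measure.volume_eq_prod, Measure.volume_eq_prod, ← Measure.prod_restrict,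
    ← Measure.prod_restrict, Measure.restrict_univ, Measure.restrict_univ, mulHaarIoi,
    prod_withDensity_left measurable_inv.ennreal_ofReal]
  exact (prod_withDensity_right (g := fun q : ℝ × ℝ => ENNReal.ofReal q.1⁻¹)
    (measurable_inv.ennreal_ofReal.comp measurable_fst)).symm

@[fun_prop]
theorem continuous_Lam : Continuous Lam := by
  refine continuous_pi fun i => continuous_pi fun j => ?_
  fin_cases i <;> fin_cases j <;> simp [Lam] <;> fun_prop

def pmulRightHomeomorph (g₀ : P) (hg₀ : g₀.2.1 ≠ 0) : P ≃ₜ P where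
  toFun g := Pmul g g₀
  invFun h := (h.1 - (h.2.1 / g₀.2.1) • (Lam (h.2.2 - g₀.2.2)).mulVec g₀.1, h.2.1 / g₀.2.1,
    h.2.2 - g₀.2.2)
  left_inv g := by simp only [Pmul, mul_div_cancel_right₀ _ hg₀, add_sub_cancel_right]
  right_inv h := by simp only [Pmul, div_mul_cancel₀ _ hg₀, sub_add_cancel]
  continuous_toFun := by unfold Pmul; fun_prop
  continuous_invFun := by fun_prop

theorem measurePreserving_pmul_right {g₀ : P} (hg₀ : 0 < g₀.2.1) :
    MeasurePreserving (Pmul · g₀) muR muR := by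
  have hshift : Continuous fun q : ℝ × ℝ => q.1 • (Lam q.2).mulVec g₀.1 := by fun_prop
  rw [muR_eq_prod]
  exact ((measurePreserving_mul_right_mulHaarIoi hg₀).prod
    (measurePreserving_add_right volume g₀.2.2)).add_skew (μ := volume) hshift.measurable

theorem muR_right_invariant_general (f : P → ℝ)
    (g₀ : P) (hg₀ : 0 < g₀.2.1) :
    ∫ g, f (Pmul g g₀) ∂muR = ∫ g, f g ∂muR := by
  have h : MeasurePreserving (pmulRightHomeomorph g₀ hg₀.ne').toMeasurableEquiv muR muR :=
    measurePreserving_pmul_right hg₀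
  exact h.integral_comp' f

/-- `a⁻¹ db da dφ` is right-invariant. -/
theorem muR_right_invariant (f : P → ℝ) (hf : Integrable f muR)
    (g₀ : P) (hg₀ : 0 < g₀.2.1) :
    ∫ g, f (Pmul g g₀) ∂muR = ∫ g, f g ∂muR :=
  muR_right_invariant_general f g₀ hg₀
end
end

section
/- Every element of the affine Poincaré group has a square root: for (b,a,φ) ∈ G, the matrix I + √a Λ_{φ/2} is invertible, since √a cosh(φ/2) > 0 ensures det(I + √a Λ_{φ/2}) = 1 + a + 2√a cosh(φ/2) > 0; and if b' is the solution of b' + √a Λ_{φ/2} b' = b, a' = √a, φ' = φ/2, then (b',a',φ') ∗ (b',a',φ') = (b,a,φ). -/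
open Real MeasureTheory Matrix Set

noncomputable section

/-- every element of the affine Poincaré group has a square root
`(b', √a, φ/2)` where `b'` solves `b' + √a Λ_{φ/2} b' = b`; the matrix
`I + √a Λ_{φ/2}` is invertible since its determinant `1 + a + 2√a cosh(φ/2)` is
positive. -/
theorem square_root_exists (b : Fin 2 → ℝ) (a φ : ℝ) (ha : 0 < a) :
    ((1 + Real.sqrt a • Lam (φ / 2)).det =
        1 + a + 2 * Real.sqrt a * Real.cosh (φ / 2)) ∧
    0 < (1 + Real.sqrt a • Lam (φ / 2)).det ∧
    IsUnit (1 + Real.sqrt a • Lam (φ / 2)) ∧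
    (∃ b' : Fin 2 → ℝ, b' + Real.sqrt a • (Lam (φ / 2)).mulVec b' = b) ∧
    ∀ b' : Fin 2 → ℝ, b' + Real.sqrt a • (Lam (φ / 2)).mulVec b' = b →
      Pmul (b', Real.sqrt a, φ / 2) (b', Real.sqrt a, φ / 2) = (b, a, φ) := by

  have hsa : 0 < Real.sqrt a := Real.sqrt_pos.mpr ha
  have hdet : (1 + Real.sqrt a • Lam (φ / 2)).det =
      1 + a + 2 * Real.sqrt a * Real.cosh (φ / 2) := by
    have h1 : (1 : Matrix (Fin 2) (Fin 2) ℝ) + Real.sqrt a • Lam (φ / 2) =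
        !![1 + Real.sqrt a * Real.cosh (φ / 2), Real.sqrt a * Real.sinh (φ / 2);
           Real.sqrt a * Real.sinh (φ / 2), 1 + Real.sqrt a * Real.cosh (φ / 2)] := by
      simp [Lam, Matrix.one_fin_two, Matrix.smul_of]
    rw [h1, Matrix.det_fin_two_of]
    have hc := Real.cosh_sq_sub_sinh_sq (φ / 2)
    have hsq : Real.sqrt a * Real.sqrt a = a := Real.mul_self_sqrt ha.le
    nlinarith [hc, hsq]
  have hpos : 0 < (1 + Real.sqrt a • Lam (φ / 2)).det := by
    rw [hdet]
    have : 0 < Real.cosh (φ / 2) := Real.cosh_pos _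
    positivity
  refine ⟨hdet, hpos, (Matrix.isUnit_iff_isUnit_det _).mpr (isUnit_iff_ne_zero.mpr hpos.ne'), ?_, ?_⟩
  · refine ⟨(1 + Real.sqrt a • Lam (φ / 2))⁻¹.mulVec b, ?_⟩
    have hinv : (1 + Real.sqrt a • Lam (φ / 2)) *
        (1 + Real.sqrt a • Lam (φ / 2))⁻¹ = 1 :=
      Matrix.mul_nonsing_inv _ (isUnit_iff_ne_zero.mpr hpos.ne')
    calc (1 + Real.sqrt a • Lam (φ / 2))⁻¹.mulVec b +
          Real.sqrt a • (Lam (φ / 2)).mulVec ((1 + Real.sqrt a • Lam (φ / 2))⁻¹.mulVec b)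
        = ((1 + Real.sqrt a • Lam (φ / 2)) *
            (1 + Real.sqrt a • Lam (φ / 2))⁻¹).mulVec b := by
          rw [Matrix.add_mul, Matrix.one_mul, Matrix.smul_mul, Matrix.add_mulVec,
            Matrix.smul_mulVec, Matrix.mulVec_mulVec]
      _ = b := by rw [hinv, Matrix.one_mulVec]
  · intro b' hb'
    simp only [Pmul, Prod.mk.injEq]
    refine ⟨hb', Real.mul_self_sqrt ha.le, by ring⟩
end
end
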